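/- Let Σ be an e-invariant type and suppose e ∈ dcl(Σ). Then Gal^c_L(Σ, e) = Autf_KP(Σ, e)/Autf_L(Σ, e), i.e., the closure of the trivial subgroup of the relativized Lascar group Gal_L(Σ, e) equals the image of the relativized KP automorphism group. -/

import Mathlib

/- Framework: relativized Lascar groups of a first-order theory over a
hyperimaginary, following "Relativized Galois groups of first order theories
over a hyperimaginary" by H. Lee and J. Lee. -/

open FirstOrder Cardinal Pointwise

universe u

namespace RelLascar

variable {L : FirstOrder.Language.{u, u}} {M : Type u} [L.Structure M]

/-- The group of automorphisms of the monster model `M`. -/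
instance : Group (M ≃[L] M) where
  mul f g := f.comp g
  one := FirstOrder.Language.Equiv.refl L M
  inv f := f.symm
  mul_assoc f g h := (FirstOrder.Language.Equiv.comp_assoc h g f).symm
  one_mul := FirstOrder.Language.Equiv.refl_comp
  mul_one := FirstOrder.Language.Equiv.comp_refl
  inv_mul_cancel := FirstOrder.Language.Equiv.symm_comp_self

/-- Automorphisms act on the monster model. -/
instance : MulAction (M ≃[L] M) M where
  smul f x := f x
  one_smul _ := rfl
  mul_smul _ _ _ := rfl

@[simp] theorem autSmul_def (f : M ≃[L] M) (x : M) : f • x = f x := rfl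

/-- The solution set in `M` of a set of formulas in variables `ι` with
parameters `prm : π → M`. -/
def SolSet {ι π : Type u} (p : Set (L.Formula (ι ⊕ π))) (prm : π → M) : Set (ι → M) :=
  {v | ∀ φ ∈ p, φ.Realize (Sum.elim v prm)}

/-- A set of `ι`-tuples is type-definable over the parameters `prm`. -/
def TypeDefinableOver {ι π : Type u} (prm : π → M) (X : Set (ι → M)) : Prop :=
  ∃ p : Set (L.Formula (ι ⊕ π)), X = SolSet p prm

/-- Two tuples have the same (complete) type over `∅`. -/
def SameTp {ι : Type u} (c d : ι → M) : Prop :=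
  ∀ φ : L.Formula ι, φ.Realize c ↔ φ.Realize d

/-- `M` is a monster model with degree of saturation and strong homogeneity `κ`:
`κ` is uncountable, tuples of size `< κ` with the same type are conjugate under an
automorphism, and every partial type in `< κ` variables over `< κ` parameters that
is finitely realized in `M` is realized in `M`.  ("Small" means of size `< κ`.) -/
def IsMonster (κ : Cardinal.{u}) (L : FirstOrder.Language.{u, u}) (M : Type u) [L.Structure M] : Prop :=
  ℵ₀ < κ ∧
  (∀ (ι : Type u) (c d : ι → M), #ι < κ → SameTp (L := L) (M := M) c d →
      ∃ f : M ≃[L] M, ∀ i, f (c i) = d i) ∧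
  (∀ (ι π : Type u) (prm : π → M) (p : Set (L.Formula (ι ⊕ π))), #ι < κ → #π < κ →
      (∀ q : Finset (L.Formula (ι ⊕ π)), ↑q ⊆ p →
        ∃ v : ι → M, ∀ φ ∈ (q : Set (L.Formula (ι ⊕ π))), φ.Realize (Sum.elim v prm)) →
      ∃ v : ι → M, v ∈ SolSet p prm)

variable (κ : Cardinal.{u})

section Hyperimaginary

/- The hyperimaginary `e = a_E`, where `E` is the `∅`-type-definable equivalence
relation defined by the set of formulas `pE` and `a : γ → M`. -/
variable {γ : Type u} (pE : Set (L.Formula (γ ⊕ γ))) (a : γ → M)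

/-- The relation defined by a set of formulas in variables `δ ⊕ δ` (with no
parameters); for `pE` this is the equivalence relation `E`. -/
def Frel {δ : Type u} (pF : Set (L.Formula (δ ⊕ δ))) (x y : δ → M) : Prop :=
  ∀ φ ∈ pF, φ.Realize (Sum.elim x y)

/-- The class of a tuple `x` under the relation defined by `pF`; for an
equivalence relation this is the hyperimaginary `x_F` (as a set of representatives). -/
def Fclass {δ : Type u} (pF : Set (L.Formula (δ ⊕ δ))) (x : δ → M) : Set (δ → M) :=
  {y | Frel pF x y}

/-- `Aut_e(𝔠)`: the subgroup of automorphisms fixing the hyperimaginary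
`e = a_E` setwise. -/
def AutE : Subgroup (M ≃[L] M) := MulAction.stabilizer (M ≃[L] M) (Fclass pE a)

/-- `Aut_e(𝔠)` as a group. -/
abbrev Ge := ↥(AutE pE a)

/-- The hyperimaginary `e` is definable over the tuple `t` (i.e. `e ∈ dcl(t)`):
every automorphism fixing `t` pointwise fixes `e`. -/
def eInDclTuple {ι : Type u} (t : ι → M) : Prop :=
  ∀ f : M ≃[L] M, (∀ i, f (t i) = t i) → f ∈ AutE pE a

/-- The set of elements of `Aut_e(𝔠)` fixing pointwise some small elementary
substructure (model) `N` with `e ∈ dcl(N)`. -/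
def modelFixers : Set (Ge pE a) :=
  {f | ∃ N : L.ElementarySubstructure M, #N < κ ∧
        (∀ g : M ≃[L] M, (∀ x ∈ N, g x = x) → g ∈ AutE pE a) ∧
        ∀ x ∈ N, (f : M ≃[L] M) x = x}

/-- `Autf_L(𝔠, e)`: the normal subgroup of `Aut_e(𝔠)` generated by the
pointwise stabilizers of small models `N` with `e ∈ dcl(N)`. -/
def AutfL : Subgroup (Ge pE a) := Subgroup.normalClosure (modelFixers κ pE a)

/-- `c ≡ᴸ_e d` : the tuples have the same Lascar strong type over `e`. -/
def LEq {ι : Type u} (c d : ι → M) : Prop := ∃ f ∈ AutfL κ pE a, f • c = d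

theorem LEq.refl {ι : Type u} (c : ι → M) : LEq κ pE a c c :=
  ⟨1, one_mem _, one_smul _ _⟩

theorem LEq.symm {ι : Type u} {c d : ι → M} (h : LEq κ pE a c d) : LEq κ pE a d c := by
  obtain ⟨f, hf, rfl⟩ := h
  exact ⟨f⁻¹, inv_mem hf, inv_smul_smul f c⟩

theorem LEq.trans {ι : Type u} {c d e : ι → M} (h1 : LEq κ pE a c d)
    (h2 : LEq κ pE a d e) : LEq κ pE a c e := by
  obtain ⟨f, hf, rfl⟩ := h1
  obtain ⟨g, hg, rfl⟩ := h2
  exact ⟨g * f, mul_mem hg hf, (mul_smul g f c).symm ▸ rfl⟩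

end Hyperimaginary

section Sigma

variable {γ : Type u} (pE : Set (L.Formula (γ ⊕ γ))) (a : γ → M)
variable {V β : Type u} {pS : Set (L.Formula (V ⊕ β))} {bp : β → M}

/-- The solution set `Σ(𝔠)` of the partial type `Σ` (given by formulas `pS` over
the parameters `bp`). -/
abbrev Sol (pS : Set (L.Formula (V ⊕ β))) (bp : β → M) : Set (V → M) := SolSet pS bp

/-- The type of realizations of `Σ`. -/
abbrev SolT (pS : Set (L.Formula (V ⊕ β))) (bp : β → M) := ↥(Sol pS bp)

variable (pS bp) in
/-- The partial type `Σ` is `e`-invariant. -/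
def SolInv : Prop := ∀ (g : Ge pE a) (v : V → M), v ∈ Sol pS bp → g • v ∈ Sol pS bp

/-- The restriction homomorphism `Aut_e(𝔠) → Perm(Σ(𝔠))`, `f ↦ f ↾ Σ(𝔠)`. -/
def resPerm (hInv : SolInv pE a pS bp) : Ge pE a →* Equiv.Perm (SolT pS bp) where
  toFun g :=
    { toFun := fun v => ⟨g • (v : V → M), hInv g v v.2⟩
      invFun := fun v => ⟨g⁻¹ • (v : V → M), hInv g⁻¹ v v.2⟩
      left_inv := fun v => Subtype.ext (inv_smul_smul g (v : V → M))
      right_inv := fun v => Subtype.ext (smul_inv_smul g (v : V → M)) }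
  map_one' := Equiv.ext fun v => Subtype.ext (one_smul (Ge pE a) (v : V → M))
  map_mul' g h := Equiv.ext fun v => Subtype.ext (mul_smul g h (v : V → M))

/-- `Aut_e(Σ) = {f ↾ Σ(𝔠) : f ∈ Aut_e(𝔠)}`, as a subgroup of the permutations of
`Σ(𝔠)`. -/
def AutES (hInv : SolInv pE a pS bp) : Subgroup (Equiv.Perm (SolT pS bp)) :=
  (resPerm pE a hInv).range

/-- `Aut_e(Σ)` as a group. -/
abbrev GS (hInv : SolInv pE a pS bp) := ↥(AutES pE a hInv)

/-- The restriction map `ξ : Aut_e(𝔠) → Aut_e(Σ)`. -/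
def toGS (hInv : SolInv pE a pS bp) : Ge pE a →* GS pE a hInv :=
  (resPerm pE a hInv).rangeRestrict

/-- A tuple of realizations of `Σ`, flattened to a tuple of elements of `M`. -/
def flat {ι : Type u} (c : ι → SolT pS bp) : ι × V → M := fun p => (c p.1 : V → M) p.2

theorem flat_toGS_smul (hInv : SolInv pE a pS bp) {ι : Type u} (g : Ge pE a)
    (c : ι → SolT pS bp) : flat ((toGS pE a hInv g) • c) = g • flat c := rfl

theorem flat_smul_of_res (hInv : SolInv pE a pS bp) {ι : Type u} {τ : GS pE a hInv}
    {g : Ge pE a} (hg : resPerm pE a hInv g = ↑τ) (c : ι → SolT pS bp) :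
    flat (τ • c) = g • flat c := by
  have : τ = toGS pE a hInv g := Subtype.ext hg.symm
  subst this
  rfl

/-- `Autf_L(Σ, e)`: the subgroup of `Aut_e(Σ)` consisting of those restricted
automorphisms `σ` such that every small tuple of realizations of `Σ` has the same
Lascar strong type over `e` as its image under `σ`. -/
def AutfLS (hInv : SolInv pE a pS bp) : Subgroup (GS pE a hInv) where
  carrier := {σ | ∀ (ι : Type u), #ι < κ → ∀ c : ι → SolT pS bp,
      LEq κ pE a (flat c) (flat (σ • c))}
  one_mem' := by
    intro ι _ c
    rw [one_smul]
    exact LEq.refl κ pE a _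
  mul_mem' := by
    intro σ τ hσ hτ ι hι c
    rw [mul_smul]
    exact LEq.trans κ pE a (hτ ι hι c) (hσ ι hι (τ • c))
  inv_mem' := by
    intro σ hσ ι hι c
    have h := hσ ι hι (σ⁻¹ • c)
    rw [smul_inv_smul] at h
    exact LEq.symm κ pE a h

theorem AutfLS_normal (hInv : SolInv pE a pS bp) : (AutfLS κ pE a hInv).Normal := by
  constructor
  intro σ hσ τ ι hι c
  obtain ⟨g, hg⟩ := τ.2
  have hginv : resPerm pE a hInv g⁻¹ = ↑τ⁻¹ := by
    rw [map_inv, hg]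
    rfl
  obtain ⟨f, hf, hfe⟩ := hσ ι hι (τ⁻¹ • c)
  refine ⟨g * f * g⁻¹, (Subgroup.normalClosure_normal).conj_mem f hf g, ?_⟩
  have h1 : flat (τ⁻¹ • c) = g⁻¹ • flat c := flat_smul_of_res pE a hInv hginv c
  have h2 : flat ((τ * σ * τ⁻¹) • c) = g • flat (σ • τ⁻¹ • c) := by
    rw [mul_smul, mul_smul]
    exact flat_smul_of_res pE a hInv hg _
  rw [h2, ← hfe, h1, ← mul_smul, ← mul_smul]

/-- The relativized Lascar group `Gal_L(Σ, e) = Aut_e(Σ) / Autf_L(Σ, e)`. -/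
def GalL (hInv : SolInv pE a pS bp) := GS pE a hInv ⧸ AutfLS κ pE a hInv

/-- The projection `π_b : Aut_e(Σ) → Gal_L(Σ, e)`. -/
def projb (hInv : SolInv pE a pS bp) : GS pE a hInv → GalL κ pE a hInv :=
  QuotientGroup.mk

/-- The projection `π_Σ : Aut_e(𝔠) → Gal_L(Σ, e)`. -/
def projS (hInv : SolInv pE a pS bp) : Ge pE a → GalL κ pE a hInv :=
  fun g => projb κ pE a hInv (toGS pE a hInv g)

/-- A Lascar tuple in `Σ` over `e`: a small tuple `b` of realizations of `Σ` such
that `Autf_L(Σ, e) = {σ ∈ Aut_e(Σ) : b ≡ᴸ_e σ(b)}`. -/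
def IsLascarTuple (hInv : SolInv pE a pS bp) {ιb : Type u} (b : ιb → SolT pS bp) : Prop :=
  #ιb < κ ∧ ∀ σ : GS pE a hInv,
    σ ∈ AutfLS κ pE a hInv ↔ LEq κ pE a (flat b) (flat (σ • b))

variable (pS bp) in
/-- `e ∈ dcl(Σ)`: there is a small tuple of realizations of `Σ` over which `e` is
definable. -/
def eInDclSigma : Prop :=
  ∃ (ι : Type u) (c : ι → SolT pS bp), #ι < κ ∧ eInDclTuple pE a (flat c)

/-- The complete type of the tuple `v` over the parameters `prm` (with both
indexed by `ι`): the set of formulas realized by `v` with parameters `prm`. -/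
def tpOver {ι : Type u} (prm v : ι → M) : Set (L.Formula (ι ⊕ ι)) :=
  {φ | φ.Realize (Sum.elim v prm)}

/-- The type space `S_b(b) = {tp(f(b)/b) : f ∈ Aut_e(𝔠)}` over a tuple `b` of
realizations of `Σ`. -/
def Sb {ιb : Type u} (b : ιb → SolT pS bp) :
    Set (Set (L.Formula ((ιb × V) ⊕ (ιb × V)))) :=
  Set.range fun g : Ge pE a => tpOver (flat b) (g • flat b)

/-- The logic topology on a set of types: the subspace topology induced from the
product topology on `Formula → Bool` via characteristic functions. -/
noncomputable def typeSetTop {F : Type u} (X : Set (Set F)) : TopologicalSpace ↥X :=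
  TopologicalSpace.induced
    (fun p (φ : F) => (p : Set F).boolIndicator φ) inferInstance

/-- The map `ν_b : S_b(b) → Gal_L(Σ, e)`, `tp(σ(b)/b) ↦ [σ]`. -/
noncomputable def nub (hInv : SolInv pE a pS bp) {ιb : Type u} (b : ιb → SolT pS bp) :
    ↥(Sb pE a b) → GalL κ pE a hInv :=
  fun p => projS κ pE a hInv (Set.mem_range.mp p.2).choose

/-- The topology `𝔱_b` on the relativized Lascar group `Gal_L(Σ, e)`: the quotient
topology induced by `ν_b` from the logic topology on `S_b(b)`. -/
noncomputable def galTopb (hInv : SolInv pE a pS bp) {ιb : Type u}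
    (b : ιb → SolT pS bp) : TopologicalSpace (GalL κ pE a hInv) :=
  (typeSetTop (Sb pE a b)).coinduced (nub κ pE a hInv b)

end Sigma

section GalT

variable {γ : Type u} (pE : Set (L.Formula (γ ⊕ γ))) (a : γ → M)

/-- The Lascar group `Gal_L(T, e) = Aut_e(𝔠) / Autf_L(𝔠, e)`. -/
def GalT := Ge pE a ⧸ AutfL κ pE a

/-- The projection `π : Aut_e(𝔠) → Gal_L(T, e)`. -/
def projT : Ge pE a → GalT κ pE a := QuotientGroup.mk

/-- The type space `S_N(N) = {tp(f(N)/N) : f ∈ Aut_e(𝔠)}` over a small model `N`. -/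
def SMod (N : L.ElementarySubstructure M) : Set (Set (L.Formula (↥N ⊕ ↥N))) :=
  Set.range fun g : Ge pE a =>
    tpOver (Subtype.val : ↥N → M) (g • (Subtype.val : ↥N → M))

/-- The map `ν : S_N(N) → Gal_L(T, e)`, `tp(f(N)/N) ↦ [f]`. -/
noncomputable def nuT (N : L.ElementarySubstructure M) :
    ↥(SMod pE a N) → GalT κ pE a :=
  fun p => projT κ pE a (Set.mem_range.mp p.2).choose

/-- The standard quotient topology on the Lascar group `Gal_L(T, e)` induced via
the type space over a small model `N` (with `e ∈ dcl(N)`). -/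
noncomputable def galTopT (N : L.ElementarySubstructure M) :
    TopologicalSpace (GalT κ pE a) :=
  (typeSetTop (SMod pE a N)).coinduced (nuT κ pE a N)

/-- `Autf_KP(𝔠, e)`: the preimage under `π` of the closure of the identity in
`Gal_L(T, e)`. -/
noncomputable def AutfKPset (N : L.ElementarySubstructure M) : Set (Ge pE a) :=
  projT κ pE a ⁻¹' (@closure _ (galTopT κ pE a N) {projT κ pE a 1})

/-- `Autf_S(𝔠, e)`: the preimage under `π` of the connected component of the
identity in `Gal_L(T, e)`. -/
noncomputable def AutfSset (N : L.ElementarySubstructure M) : Set (Ge pE a) :=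
  projT κ pE a ⁻¹' (@connectedComponent _ (galTopT κ pE a N) (projT κ pE a 1))

/-- `c ≡ᴷᴾ_e d` : the tuples have the same KP strong type over `e`. -/
def KPeq (N : L.ElementarySubstructure M) {ι : Type u} (c d : ι → M) : Prop :=
  ∃ f ∈ AutfKPset κ pE a N, f • c = d

/-- `c ≡ˢ_e d` : the tuples have the same Shelah strong type over `e`. -/
def Seq (N : L.ElementarySubstructure M) {ι : Type u} (c d : ι → M) : Prop :=
  ∃ f ∈ AutfSset κ pE a N, f • c = d

end GalT

section Relativized

variable {γ : Type u} (pE : Set (L.Formula (γ ⊕ γ))) (a : γ → M)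
variable {V β : Type u} {pS : Set (L.Formula (V ⊕ β))} {bp : β → M}

/-- `Autf_KP(Σ, e)`: the set of restricted automorphisms fixing the KP strong
type of every small tuple of realizations of `Σ`. -/
noncomputable def AutfKPSset (hInv : SolInv pE a pS bp) (N : L.ElementarySubstructure M) :
    Set (GS pE a hInv) :=
  {σ | ∀ (ι : Type u), #ι < κ → ∀ c : ι → SolT pS bp,
      KPeq κ pE a N (flat c) (flat (σ • c))}

/-- `Autf_S(Σ, e)`: the set of restricted automorphisms fixing the Shelah strong
type of every small tuple of realizations of `Σ`. -/
noncomputable def AutfSSset (hInv : SolInv pE a pS bp) (N : L.ElementarySubstructure M) :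
    Set (GS pE a hInv) :=
  {σ | ∀ (ι : Type u), #ι < κ → ∀ c : ι → SolT pS bp,
      Seq κ pE a N (flat c) (flat (σ • c))}

/-- The orbit under `Aut_e(𝔠)` of the hyperimaginary given by the class of `x`
under the relation defined by `pF` is small ("`x_F` is bounded over `e`"). -/
def BoundedClass {δ : Type u} (pF : Set (L.Formula (δ ⊕ δ))) (x : δ → M) : Prop :=
  #↥(Set.range fun g : Ge pE a => g • Fclass pF x) < κ

/-- The orbit under `Aut_e(𝔠)` of the hyperimaginary given by the class of `x` is
finite ("`x_F` is algebraic over `e`"). -/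
def FiniteClass {δ : Type u} (pF : Set (L.Formula (δ ⊕ δ))) (x : δ → M) : Prop :=
  (Set.range fun g : Ge pE a => g • Fclass pF x).Finite

/-- `f` fixes the hyperimaginary given by the class of `x` (setwise). -/
def FixesClass (f : Ge pE a) {δ : Type u} (pF : Set (L.Formula (δ ⊕ δ)))
    (x : δ → M) : Prop :=
  f • Fclass pF x = Fclass pF x

variable (pS bp) in
/-- `f` fixes every hyperimaginary that is bounded over `e` and has a
representative which is a small tuple of realizations of `Σ`, i.e. `f` fixes
`bdd(e) ∩ Σ` pointwise. -/
def fixesAllBddS (f : Ge pE a) : Prop :=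
  ∀ (ι : Type u) (pF : Set (L.Formula ((ι × V) ⊕ (ι × V)))) (c : ι → SolT pS bp),
    #ι < κ → Equivalence (Frel (M := M) pF) → BoundedClass κ pE a pF (flat c) →
    FixesClass pE a f pF (flat c)

variable (pS bp) in
/-- `f` fixes every hyperimaginary that is algebraic over `e` and has a
representative which is a small tuple of realizations of `Σ`, i.e. `f` fixes
`acl(e) ∩ Σ` pointwise. -/
def fixesAllAclS (f : Ge pE a) : Prop :=
  ∀ (ι : Type u) (pF : Set (L.Formula ((ι × V) ⊕ (ι × V)))) (c : ι → SolT pS bp),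
    #ι < κ → Equivalence (Frel (M := M) pF) → FiniteClass pE a pF (flat c) →
    FixesClass pE a f pF (flat c)

end Relativized


section More

variable {γ : Type u} (pE : Set (L.Formula (γ ⊕ γ))) (a : γ → M)
variable {V β : Type u} {pS : Set (L.Formula (V ⊕ β))} {bp : β → M}

theorem mem_AutfLS_iff (hInv : SolInv pE a pS bp) {σ : GS pE a hInv} :
    σ ∈ AutfLS κ pE a hInv ↔ ∀ (ι : Type u), #ι < κ → ∀ c : ι → SolT pS bp,
      LEq κ pE a (flat c) (flat (σ • c)) := Iff.rfl

theorem toGS_mem_autfLS (hInv : SolInv pE a pS bp) {f : Ge pE a}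
    (hf : f ∈ AutfL κ pE a) : toGS pE a hInv f ∈ AutfLS κ pE a hInv :=
  (mem_AutfLS_iff κ pE a hInv).mpr
    (fun ι _ c => ⟨f, hf, (flat_toGS_smul pE a hInv f c).symm⟩)

instance AutfL_normal : (AutfL κ pE a).Normal :=
  Subgroup.normalClosure_normal

/-- The group structure of the relativized Lascar group `Gal_L(Σ, e)`. -/
noncomputable def galLGroup (hInv : SolInv pE a pS bp) : Group (GalL κ pE a hInv) :=
  @QuotientGroup.Quotient.group _ _ (AutfLS κ pE a hInv) (AutfLS_normal κ pE a hInv)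

/-- The natural projection `ξ_L : Gal_L(T, e) → Gal_L(Σ, e)`. -/
noncomputable def xiL (hInv : SolInv pE a pS bp) : GalT κ pE a → GalL κ pE a hInv :=
  haveI := AutfLS_normal κ pE a hInv
  ⇑(QuotientGroup.map (AutfL κ pE a) (AutfLS κ pE a hInv) (toGS pE a hInv)
    (fun _ hf => Subgroup.mem_comap.mpr (toGS_mem_autfLS κ pE a hInv hf)))

/-- The orbit equivalence relation `≡ᴴ` of a set `H` of restricted automorphisms,
on tuples of realizations of `Σ`. -/
def orbEq {hInv : SolInv pE a pS bp} (H : Set (GS pE a hInv)) {ι : Type u}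
    (c d : ι → SolT pS bp) : Prop :=
  ∃ h ∈ H, h • c = d

end More

/-! Both `Gal_L(T, e)` and `Gal_L(Σ, e)` carry quotient topologies of type spaces, `S_N(N)` and
`S_b(b)`, and restriction makes both of them quotients of the single type space `S_{Nb}(Nb)`,
which saturation makes compact. Hence the natural map `ξ_L : Gal_L(T, e) → Gal_L(Σ, e)` is
continuous, and, `b` being a Lascar tuple, it maps the closed set
`closure {1} = Autf_KP(𝔠, e) / Autf_L(𝔠, e)` onto a closed set: its preimage in `S_b(b)` is
the image of a compact subset of `S_{Nb}(Nb)`. So `ξ_L` carries the closure of the identity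
onto the closure of the identity, and its image is `Autf_KP(Σ, e) / Autf_L(Σ, e)`. -/

section Cardinals

theorem mk_sum_lt {α α' : Type u} (hκ : ℵ₀ ≤ κ) (hα : #α < κ) (hα' : #α' < κ) :
    #(α ⊕ α') < κ := by
  rw [Cardinal.mk_sum, Cardinal.lift_id, Cardinal.lift_id]
  exact Cardinal.add_lt_of_lt hκ hα hα'

theorem mk_prod_lt {α α' : Type u} (hκ : ℵ₀ ≤ κ) (hα : #α < κ) (hα' : #α' < κ) :
    #(α × α') < κ := by
  rw [Cardinal.mk_prod, Cardinal.lift_id, Cardinal.lift_id]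
  exact Cardinal.mul_lt_of_lt hκ hα hα'

end Cardinals

section Automorphisms

variable {γ : Type u} (pE : Set (L.Formula (γ ⊕ γ))) (a : γ → M)

theorem smul_fclass {δ : Type u} (pF : Set (L.Formula (δ ⊕ δ))) (f : M ≃[L] M) (x : δ → M) :
    f • Fclass pF x = Fclass pF (f ∘ x) := by
  ext y
  rw [Set.mem_smul_set_iff_inv_smul_mem]
  refine forall₂_congr fun φ _ => ?_
  rw [← FirstOrder.Language.StrongHomClass.realize_formula f, Sum.comp_elim]
  congr! 2
  funext i
  exact congrArg (fun h : M ≃[L] M => h (y i)) (mul_inv_cancel f)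

theorem mem_autE_iff_frel (hE : Equivalence (Frel (M := M) pE)) (f : M ≃[L] M) :
    f ∈ AutE pE a ↔ Frel pE a (f ∘ a) := by
  rw [AutE, MulAction.mem_stabilizer_iff, smul_fclass]
  constructor
  · intro h
    have hfa : f ∘ a ∈ Fclass pE (f ∘ a) := hE.refl (f ∘ a)
    rwa [h] at hfa
  · intro h
    ext z
    exact ⟨fun hz => hE.trans h hz, fun hz => hE.trans (hE.symm h) hz⟩

end Automorphisms

section TypeSpaces

theorem t2Space_typeSetTop {F : Type u} (X : Set (Set F)) : @T2Space _ (typeSetTop X) :=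
  letI := typeSetTop X
  Topology.IsEmbedding.t2Space ⟨⟨rfl⟩, fun p q h => Subtype.ext <| Set.ext fun φ => by
    rw [Set.mem_iff_boolIndicator, Set.mem_iff_boolIndicator, congrFun h φ]⟩

theorem compactSpace_typeSetTop {F : Type u} (X : Set (Set F))
    (hX : IsClosed (Set.range fun p : X => (p : Set F).boolIndicator)) :
    @CompactSpace _ (typeSetTop X) :=
  letI := typeSetTop X
  ⟨(Topology.IsInducing.isCompact_iff ⟨rfl⟩).2 (by rw [Set.image_univ]; exact hX.isCompact)⟩

theorem sameTp_of_forall_realize {ι : Type u} {c d : ι → M}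
    (h : ∀ θ : L.Formula ι, θ.Realize c → θ.Realize d) : SameTp (L := L) c d := fun θ =>
  ⟨h θ, fun hd => by_contra fun hc => (h θ.not hc) hd⟩

def literal {α : Type u} (φ : L.Formula α) : Bool → L.Formula α
  | true => φ
  | false => φ.not

theorem realize_literal {α : Type u} (φ : L.Formula α) (b : Bool) (v : α → M) :
    (literal φ b).Realize v ↔ (φ.Realize v ↔ b = true) := by
  cases b <;> simp [literal]

theorem realize_relabel_inl {ξ π : Type u} (θ : L.Formula ξ) (x : ξ → M) (prm : π → M) :
    (θ.relabel Sum.inl).Realize (Sum.elim x prm) ↔ θ.Realize x := by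
  rw [FirstOrder.Language.Formula.realize_relabel, Sum.elim_comp_inl]

variable {ξ π F : Type u}

noncomputable def profile (ρ : F → L.Formula (ξ ⊕ π)) (prm : π → M) (x : ξ → M) : F → Bool :=
  {φ | (ρ φ).Realize (Sum.elim x prm)}.boolIndicator

theorem realize_literal_iff_profile (ρ : F → L.Formula (ξ ⊕ π)) (prm : π → M) (x : ξ → M)
    (φ : F) (b : Bool) :
    (literal (ρ φ) b).Realize (Sum.elim x prm) ↔ profile ρ prm x φ = b := by
  rw [realize_literal, profile, ← Bool.coe_iff_coe (b := b), ← Set.mem_iff_boolIndicator]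
  rfl

/-- Finitely many coordinates of `χ` are matched by the profile of some member of `X`, so
`P ∪ {literal (ρ φ) (χ φ)}` is finitely satisfiable and saturation realizes it. -/
theorem exists_profile_eq_of_mem_closure (hM : IsMonster κ L M) (hξ : #ξ < κ) (hπ : #π < κ)
    (prm : π → M) (P : Set (L.Formula (ξ ⊕ π))) (ρ : F → L.Formula (ξ ⊕ π)) {X : Set (ξ → M)}
    (hX : X ⊆ SolSet P prm) {χ : F → Bool} (hχ : χ ∈ closure (profile ρ prm '' X)) :
    ∃ x ∈ SolSet P prm, profile ρ prm x = χ := by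
  let lit : F → L.Formula (ξ ⊕ π) := fun φ => literal (ρ φ) (χ φ)
  obtain ⟨x, hx⟩ := hM.2.2 ξ π prm (Set.range lit ∪ P) hξ hπ fun q hq => by
    obtain ⟨S, -, hSfin, hqS⟩ := (Set.exists_subset_image_finite_and (f := lit) (s := Set.univ)
      (p := fun T => (q : Set _) ⊆ T ∪ P)).1 ⟨↑q ∩ Set.range lit,
        by rw [Set.image_univ]; exact Set.inter_subset_right, q.finite_toSet.inter_of_left _,
        fun ψ hψ => (hq hψ).imp (fun h => ⟨hψ, h⟩) id⟩
    obtain ⟨_, hxS, ⟨x, hxX, rfl⟩⟩ := mem_closure_iff.1 hχ (S.pi fun φ => {χ φ})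
      (isOpen_set_pi hSfin fun _ _ => isOpen_discrete _) fun φ _ => rfl
    refine ⟨x, fun ψ hψ => ?_⟩
    rcases hqS hψ with ⟨φ, hφ, rfl⟩ | hψP
    · exact (realize_literal_iff_profile ρ prm x φ _).2 (hxS φ hφ)
    · exact hX hxX ψ hψP
  exact ⟨x, fun ψ hψ => hx ψ (Or.inr hψ),
    funext fun φ => (realize_literal_iff_profile ρ prm x φ _).1 (hx _ (Or.inl ⟨φ, rfl⟩))⟩

end TypeSpaces

section OrbitTypes

variable {γ : Type u} (pE : Set (L.Formula (γ ⊕ γ))) (a : γ → M)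

/-- The type space `S_t(t) = {tp(g(t)/t) : g ∈ Aut_e(𝔠)}`. -/
def orbitTypes {ι : Type u} (t : ι → M) : Set (Set (L.Formula (ι ⊕ ι))) :=
  Set.range fun g : Ge pE a => tpOver t (g • t)

def orbitType {ι : Type u} (t : ι → M) (g : Ge pE a) : orbitTypes pE a t :=
  ⟨tpOver t (g • t), g, rfl⟩

theorem orbitType_surjective {ι : Type u} (t : ι → M) : Function.Surjective (orbitType pE a t) :=
  fun q => let ⟨g, hg⟩ := q.2; ⟨g, Subtype.ext hg⟩

/-- The types over `t` of the tuples `g(t)` are those of the `x` for which some `y` makes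
`(x, y)` have the type of `(t, a)` and `a E y`, a partial type over `(t, a)`; so by
saturation they form a closed set. -/
theorem isClosed_range_boolIndicator_tpOver (hM : IsMonster κ L M) (hγ : #γ < κ)
    (hE : Equivalence (Frel (M := M) pE)) {ι : Type u} (hι : #ι < κ) (t : ι → M) :
    IsClosed (Set.range fun g : Ge pE a => (tpOver (L := L) t (g • t)).boolIndicator) := by
  let prm : ι ⊕ γ → M := Sum.elim t a
  -- `relE` turns `φ ∈ pE` into `φ(a, y)`, for the variables `(x, y)` and the parameters `(t, a)`
  let relE : γ ⊕ γ → (ι ⊕ γ) ⊕ (ι ⊕ γ) := Sum.elim (Sum.inr ∘ Sum.inr) (Sum.inl ∘ Sum.inr)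
  let P : Set (L.Formula ((ι ⊕ γ) ⊕ (ι ⊕ γ))) :=
    (fun θ : L.Formula (ι ⊕ γ) => θ.relabel Sum.inl) '' {θ | θ.Realize prm} ∪
      FirstOrder.Language.Formula.relabel relE '' pE
  let ρ : L.Formula (ι ⊕ ι) → L.Formula ((ι ⊕ γ) ⊕ (ι ⊕ γ)) :=
    fun φ => φ.relabel (Sum.map Sum.inl Sum.inl)
  have realize_pE : ∀ (x : ι ⊕ γ → M) (φ : L.Formula (γ ⊕ γ)),
      (φ.relabel relE).Realize (Sum.elim x prm) ↔ φ.Realize (Sum.elim a (x ∘ Sum.inr)) :=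
    fun x φ => by
    rw [FirstOrder.Language.Formula.realize_relabel, Sum.comp_elim]
    rfl
  have hprofile : ∀ x, profile ρ prm x = (tpOver t (x ∘ Sum.inl)).boolIndicator := fun x =>
    congrArg Set.boolIndicator <| Set.ext fun φ =>
      (FirstOrder.Language.Formula.realize_relabel ..).trans (by rw [Sum.elim_comp_map]; rfl)
  have hrange : (Set.range fun g : Ge pE a => (tpOver (L := L) t (g • t)).boolIndicator) =
      profile ρ prm '' Set.range fun g : Ge pE a => g • prm := by
    rw [← Set.range_comp]
    exact congrArg Set.range (funext fun g => (hprofile (g • prm)).symm)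
  have hX : (Set.range fun g : Ge pE a => g • prm) ⊆ SolSet P prm := by
    rintro _ ⟨g, rfl⟩ _ (⟨θ, hθ, rfl⟩ | ⟨φ, hφ, rfl⟩)
    · exact (realize_relabel_inl θ _ prm).2
        ((FirstOrder.Language.StrongHomClass.realize_formula (g : M ≃[L] M) θ).2 hθ)
    · exact (realize_pE _ φ).2 ((mem_autE_iff_frel pE a hE g).1 g.2 φ hφ)
  rw [hrange]
  refine closure_subset_iff_isClosed.1 fun χ hχ => ?_
  have hprm : #(ι ⊕ γ) < κ := mk_sum_lt κ hM.1.le hι hγ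
  obtain ⟨x, hxP, rfl⟩ := exists_profile_eq_of_mem_closure κ hM hprm hprm prm P ρ hX hχ
  obtain ⟨f, hf⟩ := hM.2.1 (ι ⊕ γ) prm x hprm <| sameTp_of_forall_realize fun θ hθ =>
    (realize_relabel_inl θ x prm).1 (hxP _ (Or.inl ⟨θ, hθ, rfl⟩))
  have hfE : f ∈ AutE pE a := (mem_autE_iff_frel pE a hE f).2 fun φ hφ => by
    rw [show f ∘ a = x ∘ Sum.inr from funext fun i => hf (Sum.inr i)]
    exact (realize_pE x φ).1 (hxP _ (Or.inr ⟨φ, hφ, rfl⟩))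
  exact ⟨_, ⟨⟨f, hfE⟩, rfl⟩, congrArg _ (funext hf)⟩

theorem compactSpace_orbitTypes (hM : IsMonster κ L M) (hγ : #γ < κ)
    (hE : Equivalence (Frel (M := M) pE)) {ι : Type u} (hι : #ι < κ) (t : ι → M) :
    @CompactSpace _ (typeSetTop (orbitTypes pE a t)) := by
  apply compactSpace_typeSetTop
  rw [← (orbitType_surjective pE a t).range_comp]
  exact isClosed_range_boolIndicator_tpOver κ pE a hM hγ hE hι t

end OrbitTypes

section Restriction

variable {γ : Type u} (pE : Set (L.Formula (γ ⊕ γ))) (a : γ → M) {ι ι' : Type u}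

theorem tpOver_comp (t : ι → M) (j : ι' → ι) (g : Ge pE a) :
    {φ : L.Formula (ι' ⊕ ι') | φ.relabel (Sum.map j j) ∈ tpOver t (g • t)} =
      tpOver (t ∘ j) (g • (t ∘ j)) :=
  Set.ext fun _ =>
    (FirstOrder.Language.Formula.realize_relabel ..).trans (by rw [Sum.elim_comp_map]; rfl)

def restrictTypes (t : ι → M) (j : ι' → ι) (q : orbitTypes pE a t) : orbitTypes pE a (t ∘ j) :=
  ⟨{φ | φ.relabel (Sum.map j j) ∈ (q : Set (L.Formula (ι ⊕ ι)))}, by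
    obtain ⟨g, hg⟩ := q.2
    exact ⟨g, (tpOver_comp pE a t j g).symm.trans
      (congrArg (fun s => {φ : L.Formula (ι' ⊕ ι') | φ.relabel (Sum.map j j) ∈ s}) hg)⟩⟩

theorem restrictTypes_orbitType (t : ι → M) (j : ι' → ι) (g : Ge pE a) :
    restrictTypes pE a t j (orbitType pE a t g) = orbitType pE a (t ∘ j) g :=
  Subtype.ext (tpOver_comp pE a t j g)

theorem restrictTypes_surjective (t : ι → M) (j : ι' → ι) :
    Function.Surjective (restrictTypes pE a t j) := fun q => by
  obtain ⟨g, rfl⟩ := orbitType_surjective pE a (t ∘ j) q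
  exact ⟨_, restrictTypes_orbitType pE a t j g⟩

theorem continuous_restrictTypes (t : ι → M) (j : ι' → ι) :
    @Continuous _ _ (typeSetTop _) (typeSetTop _) (restrictTypes pE a t j) :=
  letI := typeSetTop (orbitTypes pE a t)
  continuous_induced_rng.2 <| continuous_pi fun φ =>
    (continuous_apply (φ.relabel (Sum.map j j))).comp (continuous_induced_dom
      (f := fun (q : orbitTypes pE a t) ψ => (q : Set (L.Formula (ι ⊕ ι))).boolIndicator ψ))

end Restriction

section Galois

variable {γ : Type u} (pE : Set (L.Formula (γ ⊕ γ))) (a : γ → M)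
variable {V β : Type u} {pS : Set (L.Formula (V ⊕ β))} {bp : β → M} {ιb : Type u}

/-- If `e ∈ dcl(t)`, two automorphisms with the same type `tp(g(t)/t)` differ by automorphisms
fixing `t` on either side, so they agree modulo any normal subgroup containing the image of
the pointwise stabilizer of `t`. -/
theorem mk_eq_of_tpOver_eq (hM : IsMonster κ L M) {ι : Type u} (hι : #ι < κ) {t : ι → M}
    (hdcl : eInDclTuple pE a t) {G : Type*} [Group G] (φ : Ge pE a →* G) (H : Subgroup G)
    [H.Normal] (hfix : ∀ f : Ge pE a, (∀ i, (f : M ≃[L] M) (t i) = t i) → φ f ∈ H)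
    {g g' : Ge pE a} (h : tpOver (L := L) t (g • t) = tpOver t (g' • t)) :
    (φ g : G ⧸ H) = φ g' := by
  obtain ⟨f, hf⟩ := hM.2.1 (ι ⊕ ι) (Sum.elim (g • t) t) (Sum.elim (g' • t) t)
    (mk_sum_lt κ hM.1.le hι hι) fun θ => Set.ext_iff.1 h θ
  let f' : Ge pE a := ⟨f, hdcl f fun i => hf (Sum.inr i)⟩
  have hu : ∀ i, ((g'⁻¹ * f' * g : Ge pE a) : M ≃[L] M) (t i) = t i := fun i => by
    change (g' : M ≃[L] M)⁻¹ (f ((g : M ≃[L] M) (t i))) = t i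
    rw [show f ((g : M ≃[L] M) (t i)) = (g' : M ≃[L] M) (t i) from hf (Sum.inl i)]
    exact congrArg (fun k : M ≃[L] M => k (t i)) (inv_mul_cancel (g' : M ≃[L] M))
  have hdecomp : g' = f' * g * (g'⁻¹ * f' * g)⁻¹ := by group
  rw [hdecomp, map_mul, map_mul, map_inv, QuotientGroup.mk_mul, QuotientGroup.mk_mul,
    QuotientGroup.mk_inv, (QuotientGroup.eq_one_iff _).2 (hfix f' fun i => hf (Sum.inr i)),
    (QuotientGroup.eq_one_iff _).2 (hfix _ hu), one_mul, inv_one, mul_one]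

theorem nuT_orbitType (hM : IsMonster κ L M) (N : L.ElementarySubstructure M) (hN : #N < κ)
    (hNdcl : ∀ g : M ≃[L] M, (∀ x ∈ N, g x = x) → g ∈ AutE pE a) (g : Ge pE a) :
    nuT κ pE a N (orbitType pE a (Subtype.val : N → M) g) = projT κ pE a g :=
  mk_eq_of_tpOver_eq κ pE a hM hN (fun f hf => hNdcl f fun x hx => hf ⟨x, hx⟩)
    (MonoidHom.id _) (AutfL κ pE a)
    (fun _ hf => Subgroup.subset_normalClosure ⟨N, hN, hNdcl, fun x hx => hf ⟨x, hx⟩⟩)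
    (Set.mem_range.mp (orbitType pE a (Subtype.val : N → M) g).2).choose_spec

theorem nub_orbitType (hM : IsMonster κ L M) (hV : #V < κ) (hInv : SolInv pE a pS bp)
    {b : ιb → SolT pS bp} (hb : IsLascarTuple κ pE a hInv b) (hbdcl : eInDclTuple pE a (flat b))
    (g : Ge pE a) : nub κ pE a hInv b (orbitType pE a (flat b) g) = projS κ pE a hInv g :=
  have := AutfLS_normal κ pE a hInv
  mk_eq_of_tpOver_eq κ pE a hM (mk_prod_lt κ hM.1.le hb.1 hV) hbdcl (toGS pE a hInv) (AutfLS κ pE a hInv)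
    (fun f hf => (hb.2 _).2 <| by
      rw [flat_toGS_smul, show f • flat b = flat b from funext hf]
      exact LEq.refl κ pE a _)
    (Set.mem_range.mp (orbitType pE a (flat b) g).2).choose_spec

theorem xiL_projT (hInv : SolInv pE a pS bp) (g : Ge pE a) :
    xiL κ pE a hInv (projT κ pE a g) = projS κ pE a hInv g := by
  have := AutfLS_normal κ pE a hInv
  exact QuotientGroup.map_mk _ _ _ _ g

theorem mul_mem_autfKPset (N : L.ElementarySubstructure M) {h l : Ge pE a}
    (hh : h ∈ AutfKPset κ pE a N) (hl : l ∈ AutfL κ pE a) : h * l ∈ AutfKPset κ pE a N := by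
  rw [AutfKPset, Set.mem_preimage, projT, QuotientGroup.mk_mul,
    (QuotientGroup.eq_one_iff l).2 hl, mul_one]
  exact hh

theorem exists_mul_smul_eq_of_projS_eq (hInv : SolInv pE a pS bp) {b : ιb → SolT pS bp}
    (hb : IsLascarTuple κ pE a hInv b) {g h : Ge pE a}
    (hgh : projS κ pE a hInv h = projS κ pE a hInv g) :
    ∃ l ∈ AutfL κ pE a, (h * l) • flat b = g • flat b := by
  have := AutfLS_normal κ pE a hInv
  have hL := QuotientGroup.eq.1 hgh
  rw [← map_inv, ← map_mul] at hL
  obtain ⟨l, hl, hlb⟩ := (hb.2 _).1 hL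
  refine ⟨l, hl, ?_⟩
  rw [mul_smul, hlb, flat_toGS_smul, ← mul_smul, mul_inv_cancel_left]

theorem image_projb_autfKPSset (hInv : SolInv pE a pS bp) {b : ιb → SolT pS bp}
    (hb : IsLascarTuple κ pE a hInv b) (N : L.ElementarySubstructure M) :
    projb κ pE a hInv '' AutfKPSset κ pE a hInv N = projS κ pE a hInv '' AutfKPset κ pE a N := by
  have := AutfLS_normal κ pE a hInv
  refine subset_antisymm ?_ ?_
  · rintro _ ⟨σ, hσ, rfl⟩
    obtain ⟨f, hf, hfb⟩ := hσ ιb hb.1 b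
    refine ⟨f, hf, QuotientGroup.eq.2 <| (hb.2 _).2 ?_⟩
    rw [mul_smul, ← map_inv, flat_toGS_smul, ← hfb, inv_smul_smul]
    exact LEq.refl κ pE a _
  · rintro _ ⟨f, hf, rfl⟩
    exact ⟨toGS pE a hInv f, fun ι _ c => ⟨f, hf, (flat_toGS_smul pE a hInv f c).symm⟩, rfl⟩

end Galois

theorem closure_image_eq_of_isClosed {X Y : Type*} [TopologicalSpace X] [TopologicalSpace Y]
    {f : X → Y} (hf : Continuous f) {s : Set X} (hs : IsClosed (f '' closure s)) :
    closure (f '' s) = f '' closure s :=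
  subset_antisymm (closure_minimal (Set.image_mono subset_closure) hs)
    (image_closure_subset_closure_image hf)

section LascarGroups

variable {γ : Type u} (pE : Set (L.Formula (γ ⊕ γ))) (a : γ → M)
variable {V β : Type u} {pS : Set (L.Formula (V ⊕ β))} {bp : β → M}

theorem nuT_restrictTypes_orbitType (hM : IsMonster κ L M) (N : L.ElementarySubstructure M)
    (hN : #N < κ) (hNdcl : ∀ g : M ≃[L] M, (∀ x ∈ N, g x = x) → g ∈ AutE pE a)
    {ιb : Type u} (b : ιb → SolT pS bp) (g : Ge pE a) :
    nuT κ pE a N (restrictTypes pE a (Sum.elim (Subtype.val : N → M) (flat b)) Sum.inl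
      (orbitType pE a _ g)) = projT κ pE a g := by
  rw [restrictTypes_orbitType]
  exact nuT_orbitType κ pE a hM N hN hNdcl g

theorem nub_restrictTypes_orbitType (hM : IsMonster κ L M) (hV : #V < κ)
    (hInv : SolInv pE a pS bp) {ιb : Type u} {b : ιb → SolT pS bp}
    (hb : IsLascarTuple κ pE a hInv b) (hbdcl : eInDclTuple pE a (flat b))
    (N : L.ElementarySubstructure M) (g : Ge pE a) :
    nub κ pE a hInv b (restrictTypes pE a (Sum.elim (Subtype.val : N → M) (flat b)) Sum.inr
      (orbitType pE a _ g)) = projS κ pE a hInv g := by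
  rw [restrictTypes_orbitType]
  exact nub_orbitType κ pE a hM hV hInv hb hbdcl g

/-- Both topologies are quotients of the compact space `S_{Nb}(Nb)`, through the restrictions
to `N` and to `b`, and `ξ_L` intertwines them. -/
theorem continuous_xiL (hM : IsMonster κ L M) (hγ : #γ < κ)
    (hE : Equivalence (Frel (M := M) pE)) (hV : #V < κ) (hInv : SolInv pE a pS bp)
    {ιb : Type u} (b : ιb → SolT pS bp) (hb : IsLascarTuple κ pE a hInv b)
    (hbdcl : eInDclTuple pE a (flat b)) (N : L.ElementarySubstructure M) (hN : #N < κ)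
    (hNdcl : ∀ g : M ≃[L] M, (∀ x ∈ N, g x = x) → g ∈ AutE pE a) :
    @Continuous _ _ (galTopT κ pE a N) (galTopb κ pE a hInv b) (xiL κ pE a hInv) := by
  let t := Sum.elim (Subtype.val : N → M) (flat b)
  let _ := typeSetTop (orbitTypes pE a t)
  let _ := typeSetTop (orbitTypes pE a (t ∘ Sum.inl))
  let _ := typeSetTop (orbitTypes pE a (t ∘ Sum.inr))
  let _ := galTopT κ pE a N
  let _ := galTopb κ pE a hInv b
  have : CompactSpace (orbitTypes pE a t) := compactSpace_orbitTypes κ pE a hM hγ hE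
    (mk_sum_lt κ hM.1.le hN (mk_prod_lt κ hM.1.le hb.1 hV)) t
  have : T2Space (orbitTypes pE a (t ∘ Sum.inl)) := t2Space_typeSetTop _
  have hrN : Topology.IsQuotientMap (restrictTypes pE a t Sum.inl) :=
    .of_surjective_continuous (restrictTypes_surjective pE a t _) (continuous_restrictTypes pE a t _)
  have hnuT : Topology.IsQuotientMap (X := orbitTypes pE a (t ∘ Sum.inl)) (nuT κ pE a N) :=
    ⟨⟨rfl⟩, fun x => by
      obtain ⟨g, rfl⟩ := QuotientGroup.mk_surjective x
      exact ⟨_, nuT_orbitType κ pE a hM N hN hNdcl g⟩⟩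
  have hcomm : ∀ q, nub κ pE a hInv b (restrictTypes pE a t Sum.inr q) =
      xiL κ pE a hInv (nuT κ pE a N (restrictTypes pE a t Sum.inl q)) := fun q => by
    obtain ⟨g, rfl⟩ := orbitType_surjective pE a t q
    rw [nub_restrictTypes_orbitType κ pE a hM hV hInv hb hbdcl,
      nuT_restrictTypes_orbitType κ pE a hM N hN hNdcl, xiL_projT]
  exact (hnuT.comp hrN).continuous_iff.2 <|
    (continuous_coinduced_rng.comp (continuous_restrictTypes pE a t Sum.inr)).congr hcomm

/-- Every `g` with `π_Σ(g) ∈ π_Σ(Autf_KP(𝔠, e))` can be replaced by an element of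
`Autf_KP(𝔠, e)` moving the Lascar tuple `b` to `g(b)`. -/
theorem preimage_nub_image_autfKPset (hM : IsMonster κ L M) (hV : #V < κ)
    (hInv : SolInv pE a pS bp) {ιb : Type u} {b : ιb → SolT pS bp}
    (hb : IsLascarTuple κ pE a hInv b) (hbdcl : eInDclTuple pE a (flat b))
    (N : L.ElementarySubstructure M) :
    nub κ pE a hInv b ⁻¹' (projS κ pE a hInv '' AutfKPset κ pE a N) =
      orbitType pE a (flat b) '' AutfKPset κ pE a N := by
  ext p
  obtain ⟨g, rfl⟩ := orbitType_surjective pE a (flat b) p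
  change nub κ pE a hInv b (orbitType pE a (flat b) g) ∈
    projS κ pE a hInv '' AutfKPset κ pE a N ↔ _
  rw [nub_orbitType κ pE a hM hV hInv hb hbdcl]
  constructor
  · rintro ⟨h, hh, hgh⟩
    obtain ⟨l, hl, hlb⟩ := exists_mul_smul_eq_of_projS_eq κ pE a hInv hb hgh
    exact ⟨h * l, mul_mem_autfKPset κ pE a N hh hl, Subtype.ext (congrArg (tpOver (flat b)) hlb)⟩
  · rintro ⟨h, hh, hhg⟩
    refine ⟨h, hh, ?_⟩
    rw [← nub_orbitType κ pE a hM hV hInv hb hbdcl, hhg, nub_orbitType κ pE a hM hV hInv hb hbdcl]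

/-- The preimage of `π_Σ(Autf_KP(𝔠, e))` in `S_b(b)` is the restriction of the closed, hence
compact, preimage of `closure {1}` in `S_{Nb}(Nb)`. -/
theorem isClosed_image_autfKPset (hM : IsMonster κ L M) (hγ : #γ < κ)
    (hE : Equivalence (Frel (M := M) pE)) (hV : #V < κ) (hInv : SolInv pE a pS bp)
    {ιb : Type u} (b : ιb → SolT pS bp) (hb : IsLascarTuple κ pE a hInv b)
    (hbdcl : eInDclTuple pE a (flat b)) (N : L.ElementarySubstructure M) (hN : #N < κ)
    (hNdcl : ∀ g : M ≃[L] M, (∀ x ∈ N, g x = x) → g ∈ AutE pE a) :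
    @IsClosed _ (galTopb κ pE a hInv b) (projS κ pE a hInv '' AutfKPset κ pE a N) := by
  let t := Sum.elim (Subtype.val : N → M) (flat b)
  let _ := typeSetTop (orbitTypes pE a t)
  let _ := typeSetTop (orbitTypes pE a (t ∘ Sum.inl))
  let _ := typeSetTop (orbitTypes pE a (t ∘ Sum.inr))
  let _ := galTopT κ pE a N
  have : CompactSpace (orbitTypes pE a t) := compactSpace_orbitTypes κ pE a hM hγ hE
    (mk_sum_lt κ hM.1.le hN (mk_prod_lt κ hM.1.le hb.1 hV)) t
  have : T2Space (orbitTypes pE a (t ∘ Sum.inr)) := t2Space_typeSetTop _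
  have hK : orbitType pE a (flat b) '' AutfKPset κ pE a N = restrictTypes pE a t Sum.inr ''
      ((nuT κ pE a N ∘ restrictTypes pE a t Sum.inl) ⁻¹' closure {projT κ pE a 1}) := by
    ext p
    constructor
    · rintro ⟨g, hg, rfl⟩
      refine ⟨orbitType pE a t g, ?_, restrictTypes_orbitType pE a t Sum.inr g⟩
      change nuT κ pE a N (restrictTypes pE a t Sum.inl (orbitType pE a t g)) ∈
        closure {projT κ pE a 1}
      rw [nuT_restrictTypes_orbitType κ pE a hM N hN hNdcl]
      exact hg
    · rintro ⟨q, hq, rfl⟩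
      obtain ⟨g, rfl⟩ := orbitType_surjective pE a t q
      refine ⟨g, ?_, (restrictTypes_orbitType pE a t Sum.inr g).symm⟩
      change projT κ pE a g ∈ closure {projT κ pE a 1}
      rw [← nuT_restrictTypes_orbitType κ pE a hM N hN hNdcl b g]
      exact hq
  refine isClosed_coinduced.2 ?_
  rw [preimage_nub_image_autfKPset κ pE a hM hV hInv hb hbdcl, hK]
  exact ((isClosed_closure.preimage (continuous_coinduced_rng.comp
    (continuous_restrictTypes pE a t _))).isCompact.image (continuous_restrictTypes pE a t _)).isClosed

theorem closure_one_eq_autfKPS (hM : IsMonster κ L M) (hγ : #γ < κ)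
    (hE : Equivalence (Frel (M := M) pE)) (hV : #V < κ)
    (hInv : SolInv pE a pS bp)
    {ιb : Type u} (b : ιb → SolT pS bp)
    (hb : IsLascarTuple κ pE a hInv b) (hbdcl : eInDclTuple pE a (flat b))
    (N : L.ElementarySubstructure M) (hN : #N < κ)
    (hNdcl : ∀ g : M ≃[L] M, (∀ x ∈ N, g x = x) → g ∈ AutE pE a) :
    @closure _ (galTopb κ pE a hInv b) {projb κ pE a hInv 1} =
      projb κ pE a hInv '' AutfKPSset κ pE a hInv N := by
  let _ := galTopT κ pE a N
  let _ := galTopb κ pE a hInv b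
  have hKP : xiL κ pE a hInv '' closure {projT κ pE a 1} =
      projS κ pE a hInv '' AutfKPset κ pE a N := by
    have hsurj : Function.Surjective (projT κ pE a) := QuotientGroup.mk_surjective
    rw [← Set.image_preimage_eq (closure {projT κ pE a 1}) hsurj, ← Set.image_comp]
    exact congrArg (· '' _) (funext (xiL_projT κ pE a hInv))
  have hone : {projb κ pE a hInv 1} = xiL κ pE a hInv '' {projT κ pE a 1} := by
    rw [Set.image_singleton, xiL_projT, projS, map_one]
  rw [image_projb_autfKPSset κ pE a hInv hb N, ← hKP, hone]
  exact closure_image_eq_of_isClosed (continuous_xiL κ pE a hM hγ hE hV hInv b hb hbdcl N hN hNdcl)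
    (hKP ▸ isClosed_image_autfKPset κ pE a hM hγ hE hV hInv b hb hbdcl N hN hNdcl)

end LascarGroups

end RelLascar
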